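/- arXiv:2009.04246 — 7 statements merged into one kernel-verified Lean document; each statement's English description precedes it below -/
import Mathlib

section
/- The equilibrium point (0,0) of the planar system du/dτ = u(u+C)((u+A)(1-u)(u-M) - Qv), dv/dτ = S(u+A)(u - v + C)v with strong Allee effect is a saddle point: the Jacobian of the vector field at (0,0) has determinant -A²C²MS < 0. -/
/-! At the origin the off-diagonal partial derivatives vanish (the first component carries the
factor `u`, the second the factor `v`), so the determinant is the product of the diagonal
entries `-ACM` and `ACS`. -/

open Matrix

/-- Jacobian matrix (via partial derivatives) of the vector field
`F(u,v) = (u(u+C)((u+A)(1-u)(u-M) - Qv), S(u+A)(u-v+C)v)` at the point `(a,b)`. -/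
noncomputable def jac (A C M Q S a b : ℝ) : Matrix (Fin 2) (Fin 2) ℝ :=
  !![deriv (fun u => u * (u + C) * ((u + A) * (1 - u) * (u - M) - Q * b)) a,
     deriv (fun v => a * (a + C) * ((a + A) * (1 - a) * (a - M) - Q * v)) b;
     deriv (fun u => S * (u + A) * (u - b + C) * b) a,
     deriv (fun v => S * (a + A) * (a - v + C) * v) b]

theorem deriv_id_mul_at_zero {𝕜 : Type*} [NontriviallyNormedField 𝕜] {f : 𝕜 → 𝕜}
    (hf : DifferentiableAt 𝕜 f 0) : deriv (fun x => x * f x) 0 = f 0 := by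
  have h := (hasDerivAt_id' (0 : 𝕜)).mul hf.hasDerivAt
  rw [one_mul, zero_mul, add_zero] at h
  exact h.deriv

theorem jac_origin (A C M Q S : ℝ) :
    jac A C M Q S 0 0 = !![-(A * C * M), 0; 0, A * C * S] := by
  have h11 := deriv_id_mul_at_zero
    (f := fun u => (u + C) * ((u + A) * (1 - u) * (u - M) - Q * 0)) (by fun_prop)
  have h22 := deriv_id_mul_at_zero (f := fun v => S * (0 + A) * (0 - v + C)) (by fun_prop)
  simp only [← mul_assoc] at h11
  simp only [mul_comm _ (S * (0 + A) * _)] at h22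
  rw [jac, h11, h22]
  ext i j
  fin_cases i <;> fin_cases j <;> simp <;> ring

theorem stmt0_general (A C M Q S : ℝ) (hA : 0 < A) (hC : 0 < C)
    (hS : 0 < S) (hM : 0 < M) :
    (jac A C M Q S 0 0).det = -A ^ 2 * C ^ 2 * M * S ∧
      -A ^ 2 * C ^ 2 * M * S < 0 := by
  refine ⟨by rw [jac_origin, det_fin_two_of]; ring, ?_⟩
  have : 0 < A ^ 2 * C ^ 2 * M * S := by positivity
  linarith

/-- The equilibrium `(0,0)` is a saddle point in the strong Allee effect case:
the Jacobian there has determinant `-A²C²MS < 0`. -/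
theorem stmt0 (A C M Q S : ℝ) (hA : 0 < A) (hA1 : A < 1) (hC : 0 < C)
    (hS : 0 < S) (hQ : 0 < Q) (hM : 0 < M) (hM1 : M < 1) :
    (jac A C M Q S 0 0).det = -A ^ 2 * C ^ 2 * M * S ∧
      -A ^ 2 * C ^ 2 * M * S < 0 :=
  stmt0_general A C M Q S hA hC hS hM
end

section
/- The equilibrium point (0,C) of the planar system du/dτ = u(u+C)((u+A)(1-u)(u-M) - Qv), dv/dτ = S(u+A)(u - v + C)v with strong Allee effect is an attractor: the Jacobian at (0,C) has determinant AC²S(AM+QC) > 0 and trace -C(AM+QC+AS) < 0. -/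
open Matrix

theorem jac_zero_left (A C M Q S b : ℝ) :
    jac A C M Q S 0 b =
      !![-C * (A * M + Q * b), 0; S * b * (A + C - b), S * A * (C - 2 * b)] := by
  have hu := hasDerivAt_id' (0 : ℝ)
  have hv := hasDerivAt_id' b
  have h11 : HasDerivAt (fun u => u * (u + C) * ((u + A) * (1 - u) * (u - M) - Q * b))
      (-C * (A * M + Q * b)) 0 :=
    ((hu.fun_mul (hu.add_const C)).fun_mul
      ((((hu.add_const A).fun_mul ((hasDerivAt_const _ 1).fun_sub hu)).fun_mul
        (hu.sub_const M)).sub_const (Q * b))).congr_deriv (by ring)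
  have h21 : HasDerivAt (fun u => S * (u + A) * (u - b + C) * b) (S * b * (A + C - b)) 0 :=
    ((((hu.add_const A).const_mul S).fun_mul ((hu.sub_const b).add_const C)).mul_const b
      ).congr_deriv (by ring)
  have h22 : HasDerivAt (fun v => S * (0 + A) * (0 - v + C) * v) (S * A * (C - 2 * b)) b :=
    (((((hasDerivAt_const _ 0).fun_sub hv).add_const C).const_mul (S * (0 + A))).fun_mul hv
      ).congr_deriv (by ring)
  ext i j
  fin_cases i <;> fin_cases j
  · exact h11.deriv
  · simp [jac]
  · exact h21.deriv
  · exact h22.deriv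

theorem stmt3_general (A C M Q S : ℝ) (hA : 0 < A) (hC : 0 < C)
    (hS : 0 < S) (hQ : 0 < Q) (hM : 0 < M) :
    (jac A C M Q S 0 C).det = A * C ^ 2 * S * (A * M + Q * C) ∧
    0 < A * C ^ 2 * S * (A * M + Q * C) ∧
    (jac A C M Q S 0 C).trace = -C * (A * M + Q * C + A * S) ∧
    -C * (A * M + Q * C + A * S) < 0 := by
  rw [jac_zero_left, det_fin_two_of, trace_fin_two_of]
  have hrate : 0 < C * (A * M + Q * C + A * S) := by positivity
  exact ⟨by ring, by positivity, by ring, by linarith⟩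

/-- The equilibrium `(0,C)` is an attractor in the strong Allee effect case:
the Jacobian there has determinant `AC²S(AM+QC) > 0` and trace `-C(AM+QC+AS) < 0`. -/
theorem stmt3 (A C M Q S : ℝ) (hA : 0 < A) (hA1 : A < 1) (hC : 0 < C)
    (hS : 0 < S) (hQ : 0 < Q) (hM : 0 < M) (hM1 : M < 1) :
    (jac A C M Q S 0 C).det = A * C ^ 2 * S * (A * M + Q * C) ∧
    0 < A * C ^ 2 * S * (A * M + Q * C) ∧
    (jac A C M Q S 0 C).trace = -C * (A * M + Q * C + A * S) ∧
    -C * (A * M + Q * C + A * S) < 0 :=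
  stmt3_general A C M Q S hA hC hS hQ hM
end

section
/- Let 0 < M < 1, 0 < A < 1, C, Q, S > 0 and suppose Δ = (1-A+G+M)² - 4(M+Q-A(M+1)+G(1-A+G+M)) > 0, where -G is the negative root of the equilibrium cubic. Then at the smaller positive equilibrium u₁ = (1-A+G+M-√Δ)/2 one has Q - J₁₁(u₁) < 0, so the Jacobian determinant at P₁ = (u₁, u₁+C) is negative and P₁ is a saddle point. -/
/-- `J₁₁(u) = -M + A(1+M) + 2u(M+1-A) - 3u²`. -/
def J11 (A M u : ℝ) : ℝ := -M + A * (1 + M) + 2 * u * (M + 1 - A) - 3 * u ^ 2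

/-- The discriminant of the quadratic factor. -/
def Δstrong (A M Q G : ℝ) : ℝ :=
  (1 - A + G + M) ^ 2 - 4 * (M + Q - A * (M + 1) + G * (1 - A + G + M))

/-- Strong Allee effect, `Δ > 0`: at the smaller positive equilibrium
`u₁ = (1-A+G+M-√Δ)/2` one has `Q - J₁₁(u₁) < 0`, so the Jacobian determinant
`S u₁ (A+u₁)(C+u₁)²(Q - J₁₁(u₁))` at `P₁` is negative and `P₁` is a saddle point. -/
theorem stmt10 (A C M Q S G : ℝ) (hM : 0 < M) (hM1 : M < 1) (hA : 0 < A) (hA1 : A < 1)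
    (hC : 0 < C) (hS : 0 < S) (hQpos : 0 < Q) (hG : 0 < G)
    (hQ : Q = (G + 1) * (G + M) * (A - G) / (C - G))
    (hΔ : 0 < Δstrong A M Q G)
    (hu1 : 0 < (1 - A + G + M - Real.sqrt (Δstrong A M Q G)) / 2) :
    Q - J11 A M ((1 - A + G + M - Real.sqrt (Δstrong A M Q G)) / 2) < 0 ∧
    S * ((1 - A + G + M - Real.sqrt (Δstrong A M Q G)) / 2) *
      (A + (1 - A + G + M - Real.sqrt (Δstrong A M Q G)) / 2) *
      (C + (1 - A + G + M - Real.sqrt (Δstrong A M Q G)) / 2) ^ 2 *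
      (Q - J11 A M ((1 - A + G + M - Real.sqrt (Δstrong A M Q G)) / 2)) < 0 := by
  set s := Real.sqrt (Δstrong A M Q G) with hs
  have hspos : 0 < s := Real.sqrt_pos.mpr hΔ
  have hs2 : s ^ 2 = Δstrong A M Q G := Real.sq_sqrt hΔ.le
  have hb : s < 1 - A + G + M := by linarith
  have hkey : Q - J11 A M ((1 - A + G + M - s) / 2)
      = -(s / 2) * (1 - A + 3 * G + M - s) := by
    have := hs2
    unfold Δstrong at this
    unfold J11
    nlinarith [this]
  have hneg : Q - J11 A M ((1 - A + G + M - s) / 2) < 0 := by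
    rw [hkey]
    have h1 : 0 < 1 - A + 3 * G + M - s := by linarith
    nlinarith
  refine ⟨hneg, ?_⟩
  have hu : 0 < (1 - A + G + M - s) / 2 := hu1
  have h1 : 0 < S * ((1 - A + G + M - s) / 2) * (A + (1 - A + G + M - s) / 2)
      * (C + (1 - A + G + M - s) / 2) ^ 2 := by positivity
  exact mul_neg_of_pos_of_neg h1 hneg
end

section
/- Under the same hypotheses (strong Allee effect, Δ > 0), at the larger positive equilibrium u₂ = (1-A+G+M+√Δ)/2 one has Q - J₁₁(u₂) > 0, so the Jacobian determinant at P₂ = (u₂, u₂+C) is positive; hence the stability of P₂ is determined by the sign of the trace (C+u₂)(u₂J₁₁(u₂) - S(A+u₂)): P₂ is stable if u₂J₁₁(u₂) < S(A+u₂), unstable if u₂J₁₁(u₂) > S(A+u₂). -/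
/-- Strong Allee effect, `Δ > 0`: at the larger positive equilibrium
`u₂ = (1-A+G+M+√Δ)/2` one has `Q - J₁₁(u₂) > 0`, so the Jacobian determinant at
`P₂` is positive; `P₂` is stable if `u₂J₁₁(u₂) < S(A+u₂)` (negative trace) and
unstable if `u₂J₁₁(u₂) > S(A+u₂)` (positive trace). -/
theorem stmt11 (A C M Q S G : ℝ) (hM : 0 < M) (hM1 : M < 1) (hA : 0 < A) (hA1 : A < 1)
    (hC : 0 < C) (hS : 0 < S) (hQpos : 0 < Q) (hG : 0 < G)
    (hQ : Q = (G + 1) * (G + M) * (A - G) / (C - G))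
    (hΔ : 0 < Δstrong A M Q G)
    (hu2 : 0 < (1 - A + G + M + Real.sqrt (Δstrong A M Q G)) / 2) :
    0 < Q - J11 A M ((1 - A + G + M + Real.sqrt (Δstrong A M Q G)) / 2) ∧
    0 < S * ((1 - A + G + M + Real.sqrt (Δstrong A M Q G)) / 2) *
      (A + (1 - A + G + M + Real.sqrt (Δstrong A M Q G)) / 2) *
      (C + (1 - A + G + M + Real.sqrt (Δstrong A M Q G)) / 2) ^ 2 *
      (Q - J11 A M ((1 - A + G + M + Real.sqrt (Δstrong A M Q G)) / 2)) ∧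
    (((1 - A + G + M + Real.sqrt (Δstrong A M Q G)) / 2) *
        J11 A M ((1 - A + G + M + Real.sqrt (Δstrong A M Q G)) / 2) <
        S * (A + (1 - A + G + M + Real.sqrt (Δstrong A M Q G)) / 2) →
      (C + (1 - A + G + M + Real.sqrt (Δstrong A M Q G)) / 2) *
        (((1 - A + G + M + Real.sqrt (Δstrong A M Q G)) / 2) *
            J11 A M ((1 - A + G + M + Real.sqrt (Δstrong A M Q G)) / 2) -
          S * (A + (1 - A + G + M + Real.sqrt (Δstrong A M Q G)) / 2)) < 0) ∧
    (S * (A + (1 - A + G + M + Real.sqrt (Δstrong A M Q G)) / 2) <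
        ((1 - A + G + M + Real.sqrt (Δstrong A M Q G)) / 2) *
          J11 A M ((1 - A + G + M + Real.sqrt (Δstrong A M Q G)) / 2) →
      0 < (C + (1 - A + G + M + Real.sqrt (Δstrong A M Q G)) / 2) *
        (((1 - A + G + M + Real.sqrt (Δstrong A M Q G)) / 2) *
            J11 A M ((1 - A + G + M + Real.sqrt (Δstrong A M Q G)) / 2) -
          S * (A + (1 - A + G + M + Real.sqrt (Δstrong A M Q G)) / 2))) := by
  set s := Real.sqrt (Δstrong A M Q G) with hsdef
  have hs0 : 0 < s := Real.sqrt_pos.mpr hΔ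
  have hs2 : s ^ 2 = Δstrong A M Q G := Real.sq_sqrt hΔ.le
  set u := (1 - A + G + M + s) / 2 with hudef
  have key : Q - J11 A M u = s * (u + G) := by
    simp only [J11, Δstrong, hudef] at hs2 ⊢
    nlinarith [hs2]
  have h1 : 0 < Q - J11 A M u := by
    rw [key]; positivity
  have hCu : 0 < C + u := by linarith
  refine ⟨h1, ?_, ?_, ?_⟩
  · positivity
  · intro h
    have : u * J11 A M u - S * (A + u) < 0 := by linarith
    exact mul_neg_of_pos_of_neg hCu this
  · intro h
    have : 0 < u * J11 A M u - S * (A + u) := by linarith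
    exact mul_pos hCu this
end

section
/- If Δ = 0 (so the two positive equilibria collapse at E = (1-A+G+M)/2), then Q - J₁₁(E) = 0, hence the Jacobian determinant at (E, E+C) vanishes. -/
/-- If `Δ = 0` (the two positive equilibria collapse at `E = (1-A+G+M)/2`), then
`Q - J₁₁(E) = 0`, hence the Jacobian determinant at `(E, E+C)` vanishes. -/
theorem stmt12 (A C M Q S G : ℝ) (hM : 0 < M) (hM1 : M < 1) (hA : 0 < A) (hA1 : A < 1)
    (hC : 0 < C) (hS : 0 < S) (hQpos : 0 < Q) (hG : 0 < G)
    (hQ : Q = (G + 1) * (G + M) * (A - G) / (C - G))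
    (hΔ : Δstrong A M Q G = 0) :
    Q - J11 A M ((1 - A + G + M) / 2) = 0 ∧
    S * ((1 - A + G + M) / 2) * (A + (1 - A + G + M) / 2) *
      (C + (1 - A + G + M) / 2) ^ 2 *
      (Q - J11 A M ((1 - A + G + M) / 2)) = 0 := by
  have h1 : Q - J11 A M ((1 - A + G + M) / 2) = 0 := by
    unfold Δstrong at hΔ
    unfold J11
    linear_combination (-1/4) * hΔ
  exact ⟨h1, by rw [h1]; ring⟩
end

section
/- For the strong Allee effect system with Δ = 0, the transversality quantities of Sotomayor's saddle-node theorem are nonzero at (E, E+C): with left eigenvector U = (-S(1+A+G+M)/(Q(1-A+G+M)), 1) of the Jacobian transpose and right eigenvector V = (1,1), one has U · f_Q = S(A+G+M+1)(1-A+2C+G+M)/(2Q(1-A+G+M)) ≠ 0 and U · D²f(V,V) = 2S(A+2-M)(A+G+M+1)/(Q(1-A+G+M)) ≠ 0, where f(u,v;Q) = ((u+A)(1-u)(u-M) - Qv, u - v + C). -/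
/-- Sotomayor transversality for the saddle-node bifurcation in the strong Allee case:
with left eigenvector `U = (-S(1+A+G+M)/(Q(1-A+G+M)))` and right eigenvector
`V = (1,1)`, and `f_Q = ((A-1-G-M-2C)/2, 0)`, `D²f(V,V) = (2(M-A-2), 0)`, both
dot products `U·f_Q` and `U·D²f(V,V)` are nonzero, with the stated values. -/
theorem stmt14 (A C M Q S G : ℝ) (hM : 0 < M) (hM1 : M < 1) (hA : 0 < A) (hA1 : A < 1)
    (hC : 0 < C) (hS : 0 < S) (hQ : 0 < Q) (hG : 0 < G)
    (hΔ : Δstrong A M Q G = 0) :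
    (-(S * (1 + A + G + M) / (Q * (1 - A + G + M))) * ((A - 1 - G - M - 2 * C) / 2) +
        1 * 0 =
      S * (A + G + M + 1) * (1 - A + 2 * C + G + M) / (2 * Q * (1 - A + G + M))) ∧
    S * (A + G + M + 1) * (1 - A + 2 * C + G + M) / (2 * Q * (1 - A + G + M)) ≠ 0 ∧
    (-(S * (1 + A + G + M) / (Q * (1 - A + G + M))) * (2 * (M - A - 2)) + 1 * 0 =
      2 * S * (A + 2 - M) * (A + G + M + 1) / (Q * (1 - A + G + M))) ∧
    2 * S * (A + 2 - M) * (A + G + M + 1) / (Q * (1 - A + G + M)) ≠ 0 := by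
  have hden : (0:ℝ) < 1 - A + G + M := by linarith
  have hQne : Q ≠ 0 := ne_of_gt hQ
  have hdne : (1 - A + G + M) ≠ 0 := ne_of_gt hden
  refine ⟨by field_simp; ring, ?_, by field_simp; ring, ?_⟩
  · have : (0:ℝ) < S * (A + G + M + 1) * (1 - A + 2 * C + G + M) / (2 * Q * (1 - A + G + M)) := by
      apply div_pos
      · exact mul_pos (mul_pos hS (by linarith)) (by linarith)
      positivity
    exact ne_of_gt this
  · have : (0:ℝ) < 2 * S * (A + 2 - M) * (A + G + M + 1) / (Q * (1 - A + G + M)) := by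
      apply div_pos
      · exact mul_pos (mul_pos (mul_pos two_pos hS) (by linarith)) (by linarith)
      positivity
    exact ne_of_gt this
end

section
/- Let M < 0, 0 < A < 1, C, Q > 0 with AM + CQ < 0 (i.e., C < -AM/Q), and let W ∈ (0,1) be a positive root of f(u) = u³ - (M+1-A)u² - (A(M+1)-Q-M)u + AM + CQ. If additionally A(1+M) - Q - M ≥ 0 and M+1-A ≥ 0, or A(1+M)-Q-M < 0 and M+1-A ≤ 0, or A(1+M)-Q-M > 0 and M+1-A < 0, then Q - J₁₁(W) > 0, where J₁₁(u) = -M + A(1+M) + 2u(M+1-A) - 3u²; hence the Jacobian determinant at (W, W+C) is positive. -/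
/-- The equilibrium cubic `f(u) = u³ - (M+1-A)u² - (A(M+1)-Q-M)u + AM + CQ`. -/
def fcubic (A C M Q u : ℝ) : ℝ :=
  u ^ 3 - (M + 1 - A) * u ^ 2 - (A * (M + 1) - Q - M) * u + A * M + C * Q

/-- Weak Allee effect: if `W ∈ (0,1)` is a positive root of the equilibrium cubic,
`C < -AM/Q`, and one of the stated sign conditions holds, then `Q - J₁₁(W) > 0`,
hence the Jacobian determinant `S W (A+W)(C+W)²(Q - J₁₁(W))` at `(W,W+C)` is positive. -/
theorem stmt15 (A C M Q S W : ℝ) (hM : M < 0) (hA : 0 < A) (hA1 : A < 1)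
    (hC : 0 < C) (hQ : 0 < Q) (hS : 0 < S)
    (hAMCQ : A * M + C * Q < 0)
    (hW0 : 0 < W) (hW1 : W < 1) (hroot : fcubic A C M Q W = 0)
    (hsign : (0 ≤ A * (1 + M) - Q - M ∧ 0 ≤ M + 1 - A) ∨
             (A * (1 + M) - Q - M < 0 ∧ M + 1 - A ≤ 0) ∨
             (0 < A * (1 + M) - Q - M ∧ M + 1 - A < 0)) :
    0 < Q - J11 A M W ∧
    0 < S * W * (A + W) * (C + W) ^ 2 * (Q - J11 A M W) := by
  have key : 0 < Q - J11 A M W := by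
    unfold fcubic at hroot
    unfold J11
    rcases hsign with ⟨h1, h2⟩ | ⟨h1, h2⟩ | ⟨h1, h2⟩
    · -- W*(Q-J11) = bW² + 2PW - 3(AM+CQ) > 0
      by_contra hx
      push_neg at hx
      nlinarith [mul_nonneg h2 (sq_nonneg W), mul_nonneg h1 hW0.le,
        mul_nonneg hW0.le (neg_nonneg.mpr hx), sq_nonneg W]
    · nlinarith [sq_nonneg W, mul_nonneg (neg_nonneg.mpr h2) hW0.le]
    · -- 3W*(Q-J11) = 6W³ - 3bW² - 3(AM+CQ) > 0
      by_contra hx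
      push_neg at hx
      nlinarith [mul_pos (mul_pos hW0 hW0) hW0,
        mul_nonneg (neg_nonneg.mpr h2.le) (sq_nonneg W),
        mul_nonneg hW0.le (neg_nonneg.mpr hx)]
  refine ⟨key, ?_⟩
  have h1 : 0 < A + W := by linarith
  have h2 : 0 < (C + W) ^ 2 := by positivity
  exact mul_pos (mul_pos (mul_pos (mul_pos hS hW0) h1) h2) key
end
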